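/- Let p ≥ 1, n ≥ 1, R_x > 0, R_θ > 0. Let X be a real p×n matrix with columns x_1,…,x_n satisfying ‖x_j‖ ≤ R_x, and let Y = (y_1,…,y_n)ᵀ with |y_j| ≤ R_x·R_θ. Let X' and Y' be obtained from X and Y by replacing the single column/entry (x_i, y_i) with (x'_i, y'_i), where ‖x'_i‖ ≤ R_x and |y'_i| ≤ R_x·R_θ. Assume both XXᵀ and X'(X')ᵀ are invertible, and let θ̂(X) = (XXᵀ)⁻¹XY and θ̂(X') = (X'(X')ᵀ)⁻¹X'Y' be the OLS estimators. Then ‖θ̂(X) − θ̂(X')‖ ≤ 2R_x²·‖(X'(X')ᵀ)⁻¹‖_op·(‖θ̂(X)‖ + R_θ), and consequently, with Π_{R_θ}(v) = (R_θ/max(‖v‖, R_θ))·v, ‖Π_{R_θ}(θ̂(X)) − Π_{R_θ}(θ̂(X'))‖ ≤ 8 R_x² R_θ · ‖(X'(X')ᵀ)⁻¹‖_op, where ‖·‖_op is the operator norm on p×p matrices. -/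

import Mathlib

open MeasureTheory ProbabilityTheory Matrix
open scoped Classical NNReal ENNReal RealInnerProductSpace

noncomputable section

namespace EPTR

variable {Z : Type*}

/-- Hamming distance between two datasets of size `n`. -/
def hDist {n : ℕ} (X X' : Fin n → Z) : ℕ :=
  (Finset.univ.filter fun i => X i ≠ X' i).card

/-- Two datasets are neighbors if they differ in exactly one coordinate. -/
def Neighbor {n : ℕ} (X X' : Fin n → Z) : Prop := hDist X X' = 1

/-- Gaussian measure on Euclidean space with mean `m` and covariance `v • I`
(the product of one-dimensional Gaussians of variance `v`). -/
def gaussianE {ι : Type*} [Fintype ι] (m : EuclideanSpace ℝ ι) (v : ℝ≥0) :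
    Measure (EuclideanSpace ℝ ι) :=
  (Measure.pi fun i => gaussianReal (m i) v).map (MeasurableEquiv.toLp 2 (ι → ℝ))

/-- The threshold shift `M = 1 + (2/ε) log (max (1/δ) (1/ε))` of the ePTR mechanism. -/
def Mshift (ε δ : ℝ) : ℝ := 1 + 2 / ε * Real.log (max (1 / δ) (1 / ε))

/-- The release probability of the ePTR mechanism at sub-distance value `g`. -/
def relProb (ε δ g : ℝ) : ℝ :=
  Real.exp (ε * (g - Mshift ε δ) / 2) / (Real.exp (ε * (g - Mshift ε δ) / 2) + 1)

/-- The standard deviation `s = (2α/ε)√(2 log(1.25/δ))` of the ePTR Gaussian noise. -/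
def noiseSD (ε δ α : ℝ) : ℝ := 2 * α / ε * Real.sqrt (2 * Real.log (1.25 / δ))

/-- Output distribution of the ePTR mechanism on input dataset `X`
(Euclidean-space valued version). -/
def ePTR {n : ℕ} {ι : Type*} [Fintype ι] (ε δ α : ℝ)
    (θhat : (Fin n → Z) → EuclideanSpace ℝ ι) (γ : (Fin n → Z) → ℝ)
    (πbot : Measure (EuclideanSpace ℝ ι)) (X : Fin n → Z) :
    Measure (EuclideanSpace ℝ ι) :=
  ENNReal.ofReal (relProb ε δ (γ X)) • gaussianE (θhat X) (Real.toNNReal (noiseSD ε δ α ^ 2))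
    + ENNReal.ofReal (1 - relProb ε δ (γ X)) • πbot

/-- Output distribution of the ePTR mechanism on input dataset `X` (real valued version). -/
def ePTR1 {n : ℕ} (ε δ α : ℝ)
    (θhat : (Fin n → Z) → ℝ) (γ : (Fin n → Z) → ℝ)
    (πbot : Measure ℝ) (X : Fin n → Z) : Measure ℝ :=
  ENNReal.ofReal (relProb ε δ (γ X)) • gaussianReal (θhat X) (Real.toNNReal (noiseSD ε δ α ^ 2))
    + ENNReal.ofReal (1 - relProb ε δ (γ X)) • πbot

/-- `(ε, δ)`-differential privacy of a mechanism: for all neighboring datasets `X, X'`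
and all measurable events `B`, `μ_X(B) ≤ e^ε μ_{X'}(B) + δ`. -/
def IsDP {n : ℕ} {Ω : Type*} [MeasurableSpace Ω]
    (mech : (Fin n → Z) → Measure Ω) (ε δ : ℝ) : Prop :=
  ∀ X X' : Fin n → Z, Neighbor X X' → ∀ B : Set Ω, MeasurableSet B →
    mech X B ≤ ENNReal.ofReal (Real.exp ε) * mech X' B + ENNReal.ofReal δ

/-- Projection onto the closed ball of radius `a` in a normed space:
`proj a v = (a / max ‖v‖ a) • v`. -/
def proj {V : Type*} [NormedAddCommGroup V] [Module ℝ V] (a : ℝ) (v : V) : V :=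
  (a / max ‖v‖ a) • v

/-- Identification of `Fin p → ℝ` with Euclidean space. -/
def toE {p : ℕ} : (Fin p → ℝ) → EuclideanSpace ℝ (Fin p) :=
  ⇑(EuclideanSpace.equiv (Fin p) ℝ).symm

/-- ℓ²-operator norm of a square matrix. -/
def opNorm {p : ℕ} (A : Matrix (Fin p) (Fin p) ℝ) : ℝ :=
  ‖Matrix.toEuclideanCLM (𝕜 := ℝ) A‖

/-- Smallest eigenvalue of a (symmetric) matrix, via the Rayleigh quotient. -/
def lambdaMin {p : ℕ} (A : Matrix (Fin p) (Fin p) ℝ) : ℝ :=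
  ⨅ v : Metric.sphere (0 : EuclideanSpace ℝ (Fin p)) 1,
    ⟪Matrix.toEuclideanCLM (𝕜 := ℝ) A v.1, v.1⟫

/-- Index set of data points carrying label `k`. -/
def Ik {n K : ℕ} {E : Type*} (X : Fin n → E × Fin K) (k : Fin K) : Finset (Fin n) :=
  Finset.univ.filter fun j => (X j).2 = k

/-- Class-`k` sample frequency `μ̂_k = |I_k| / n`. -/
def classFreq {n K : ℕ} {E : Type*} (X : Fin n → E × Fin K) (k : Fin K) : ℝ :=
  (Ik X k).card / n

/-- Class-`k` sample mean (equal to `0` if the class is empty). -/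
def classMean {n K p : ℕ} (X : Fin n → EuclideanSpace ℝ (Fin p) × Fin K) (k : Fin K) :
    EuclideanSpace ℝ (Fin p) :=
  ((Ik X k).card : ℝ)⁻¹ • ∑ j ∈ Ik X k, (X j).1

/-- The sub-distance of the ePTR Bayes classifier:
`γ(X) = max(min_k |I_k(X)| - c₀ n - 1, 0)`. -/
def gammaBC {n K : ℕ} {E : Type*} (c0 : ℝ) (X : Fin n → E × Fin K) : ℝ :=
  max (((⨅ k : Fin K, (Ik X k).card : ℕ) : ℝ) - c0 * n - 1) 0

end EPTR

/-! The normal equation `X (Xᵀ θ̂ - Y) = 0` for `θ̂ = θ̂(X)` turns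
`θ̂(X) - θ̂(X') = (X'X'ᵀ)⁻¹ X' (X'ᵀ θ̂ - Y')` into `(X'X'ᵀ)⁻¹` applied to the difference of
the `i`-th terms, `(⟪x'ᵢ, θ̂⟫ - y'ᵢ) x'ᵢ - (⟪xᵢ, θ̂⟫ - yᵢ) xᵢ`, each of norm at most
`R_x² (‖θ̂‖ + R_θ)`.
The projected bound follows since the radial retraction onto the ball of radius `a` satisfies
`‖Π u - Π v‖ ≤ 2a ‖u - v‖ / max ‖u‖ a`, and `‖u‖ + a ≤ 2 max ‖u‖ a`. -/

namespace Matrix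

variable {m n R : Type*} [Fintype n] [CommRing R]

theorem mulVec_sub_mulVec_of_forall_ne [DecidableEq n] (M M' : Matrix m n R) (v v' : n → R)
    (i : n) (h : ∀ j ≠ i, Mᵀ j = M'ᵀ j ∧ v j = v' j) :
    M *ᵥ v - M' *ᵥ v' = v i • Mᵀ i - v' i • M'ᵀ i := by
  ext r
  simp only [Pi.sub_apply, Pi.smul_apply, smul_eq_mul, mulVec, dotProduct]
  rw [← Finset.add_sum_erase _ _ (Finset.mem_univ i),
    ← Finset.add_sum_erase _ _ (Finset.mem_univ i), Finset.sum_congr rfl fun j hj => ?_]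
  · simp only [transpose_apply]; ring
  · obtain ⟨hM, hv⟩ := h j (Finset.ne_of_mem_erase hj)
    rw [← transpose_apply M, hM, hv, transpose_apply]

variable [Fintype m] [DecidableEq m]

theorem sub_nonsing_inv_mulVec {A : Matrix m m R} (hA : IsUnit A) (θ b : m → R) :
    θ - A⁻¹ *ᵥ b = A⁻¹ *ᵥ (A *ᵥ θ - b) := by
  rw [mulVec_sub, mulVec_mulVec, nonsing_inv_mul _ ((isUnit_iff_isUnit_det A).1 hA), one_mulVec]

/-- Ordinary least squares, with the data points as the columns of `X`. -/
noncomputable def ols (X : Matrix m n R) (Y : n → R) : m → R := (X * Xᵀ)⁻¹ *ᵥ (X *ᵥ Y)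

theorem mulVec_transpose_mulVec_ols_sub {X : Matrix m n R} (hX : IsUnit (X * Xᵀ)) (Y : n → R) :
    X *ᵥ (Xᵀ *ᵥ ols X Y - Y) = 0 := by
  rw [ols, mulVec_sub, mulVec_mulVec, mulVec_mulVec,
    mul_nonsing_inv _ ((isUnit_iff_isUnit_det _).1 hX), one_mulVec, sub_self]

theorem ols_sub_ols_of_forall_ne [DecidableEq n] {X X' : Matrix m n R} {Y Y' : n → R} {i : n}
    (hX : IsUnit (X * Xᵀ)) (hX' : IsUnit (X' * X'ᵀ))
    (h : ∀ j ≠ i, X'ᵀ j = Xᵀ j ∧ Y' j = Y j) :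
    ols X Y - ols X' Y' = (X' * X'ᵀ)⁻¹ *ᵥ
      ((X'ᵀ i ⬝ᵥ ols X Y - Y' i) • X'ᵀ i - (Xᵀ i ⬝ᵥ ols X Y - Y i) • Xᵀ i) := by
  rw [ols.eq_1 X' Y', sub_nonsing_inv_mulVec hX', ← mulVec_mulVec, ← mulVec_sub,
    ← sub_zero (X' *ᵥ _), ← mulVec_transpose_mulVec_ols_sub hX Y]
  congr 1
  refine mulVec_sub_mulVec_of_forall_ne _ _ _ _ i fun j hj => ?_
  obtain ⟨hXj, hYj⟩ := h j hj
  exact ⟨hXj, congrArg₂ (· ⬝ᵥ ols X Y - ·) hXj hYj⟩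

end Matrix

namespace EPTR

section ProjBall

variable {V : Type*} [NormedAddCommGroup V] [NormedSpace ℝ V] {a : ℝ}

theorem norm_proj_sub_proj_le (ha : 0 < a) (u v : V) :
    ‖proj a u - proj a v‖ ≤ 2 * a * ‖u - v‖ / max ‖u‖ a := by
  set mu := max ‖u‖ a
  set mv := max ‖v‖ a
  have hmu : 0 < mu := lt_max_of_lt_right ha
  have hmv : 0 < mv := lt_max_of_lt_right ha
  have hsplit : proj a u - proj a v = (a / mu) • (u - v) + (a / mu - a / mv) • v := by
    rw [proj, proj, smul_sub, sub_smul]; abel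
  have hscale : |a / mu - a / mv| * ‖v‖ ≤ a / mu * ‖u - v‖ := by
    have hmax : |mv - mu| ≤ ‖u - v‖ :=
      (abs_max_sub_max_le_abs _ _ _).trans ((abs_sub_comm _ _).trans_le (abs_norm_sub_norm_le u v))
    have hmv_mul : (a / mu - a / mv) * mv = a / mu * (mv - mu) := by field_simp
    calc |a / mu - a / mv| * ‖v‖ ≤ |a / mu - a / mv| * mv := by gcongr; exact le_max_left _ _
      _ = |a / mu * (mv - mu)| := by rw [← hmv_mul, abs_mul, abs_of_pos hmv]
      _ ≤ a / mu * ‖u - v‖ := by rw [abs_mul, abs_of_pos (div_pos ha hmu)]; gcongr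
  calc ‖proj a u - proj a v‖ = ‖(a / mu) • (u - v) + (a / mu - a / mv) • v‖ := by rw [hsplit]
    _ ≤ ‖(a / mu) • (u - v)‖ + ‖(a / mu - a / mv) • v‖ := norm_add_le _ _
    _ = a / mu * ‖u - v‖ + |a / mu - a / mv| * ‖v‖ := by
        rw [norm_smul, norm_smul, Real.norm_eq_abs, Real.norm_eq_abs, abs_of_pos (div_pos ha hmu)]
    _ ≤ 2 * a * ‖u - v‖ / mu := by
        have : 2 * a * ‖u - v‖ / mu = 2 * (a / mu * ‖u - v‖) := by ring
        linarith

theorem norm_proj_sub_proj_le_of_le (ha : 0 < a) {c : ℝ} (hc : 0 ≤ c) {u v : V}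
    (h : ‖u - v‖ ≤ c * (‖u‖ + a)) : ‖proj a u - proj a v‖ ≤ 4 * a * c := by
  have hmu : 0 < max ‖u‖ a := lt_max_of_lt_right ha
  calc ‖proj a u - proj a v‖ ≤ 2 * a * ‖u - v‖ / max ‖u‖ a := norm_proj_sub_proj_le ha u v
    _ ≤ 2 * a * (c * (2 * max ‖u‖ a)) / max ‖u‖ a := by
        gcongr
        refine h.trans (mul_le_mul_of_nonneg_left ?_ hc)
        linarith [le_max_left ‖u‖ a, le_max_right ‖u‖ a]
    _ = 4 * a * c := by field_simp; ring

end ProjBall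

theorem norm_inner_sub_smul_le {E : Type*} [NormedAddCommGroup E] [InnerProductSpace ℝ E]
    {x θ : E} {y R ρ : ℝ} (hx : ‖x‖ ≤ R) (hy : |y| ≤ R * ρ) :
    ‖(⟪x, θ⟫ - y) • x‖ ≤ R ^ 2 * (‖θ‖ + ρ) := by
  have hres : |⟪x, θ⟫ - y| ≤ R * ‖θ‖ + R * ρ :=
    calc |⟪x, θ⟫ - y| ≤ ‖x‖ * ‖θ‖ + |y| :=
          (abs_sub _ _).trans (by gcongr; exact abs_real_inner_le_norm x θ)
      _ ≤ R * ‖θ‖ + R * ρ := by gcongr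
  calc ‖(⟪x, θ⟫ - y) • x‖ = |⟪x, θ⟫ - y| * ‖x‖ := by rw [norm_smul, Real.norm_eq_abs]
    _ ≤ (R * ‖θ‖ + R * ρ) * R := mul_le_mul hres hx (norm_nonneg _) ((abs_nonneg _).trans hres)
    _ = R ^ 2 * (‖θ‖ + ρ) := by ring

variable {p : ℕ}

theorem toE_sub (u v : Fin p → ℝ) : toE (u - v) = toE u - toE v := rfl

theorem toE_smul (c : ℝ) (v : Fin p → ℝ) : toE (c • v) = c • toE v := rfl

theorem inner_toE (u v : Fin p → ℝ) : ⟪toE u, toE v⟫ = u ⬝ᵥ v := by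
  simp [toE, PiLp.inner_apply, dotProduct, mul_comm]

theorem norm_toE_mulVec_le (A : Matrix (Fin p) (Fin p) ℝ) (v : Fin p → ℝ) :
    ‖toE (A *ᵥ v)‖ ≤ opNorm A * ‖toE v‖ :=
  (Matrix.toEuclideanCLM (𝕜 := ℝ) A).le_opNorm (toE v)

end EPTR

open EPTR

theorem ols_sensitivity_general {p n : ℕ}
    {Rx Rθ : ℝ} (hRθ : 0 < Rθ) (i : Fin n)
    (X X' : Matrix (Fin p) (Fin n) ℝ) (Y Y' : Fin n → ℝ)
    (hXcol : ∀ j, ‖EPTR.toE fun r => X r j‖ ≤ Rx)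
    (hY : ∀ j, |Y j| ≤ Rx * Rθ)
    (hX'i : ‖EPTR.toE fun r => X' r i‖ ≤ Rx) (hY'i : |Y' i| ≤ Rx * Rθ)
    (hsame : ∀ j, j ≠ i → (∀ r, X' r j = X r j) ∧ Y' j = Y j)
    (hinv : IsUnit (X * Xᵀ)) (hinv' : IsUnit (X' * X'ᵀ)) :
    ‖EPTR.toE ((X * Xᵀ)⁻¹ *ᵥ (X *ᵥ Y)) - EPTR.toE ((X' * X'ᵀ)⁻¹ *ᵥ (X' *ᵥ Y'))‖
        ≤ 2 * Rx ^ 2 * EPTR.opNorm (X' * X'ᵀ)⁻¹ *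
            (‖EPTR.toE ((X * Xᵀ)⁻¹ *ᵥ (X *ᵥ Y))‖ + Rθ) ∧
      ‖EPTR.proj Rθ (EPTR.toE ((X * Xᵀ)⁻¹ *ᵥ (X *ᵥ Y)))
            - EPTR.proj Rθ (EPTR.toE ((X' * X'ᵀ)⁻¹ *ᵥ (X' *ᵥ Y')))‖
        ≤ 8 * Rx ^ 2 * Rθ * EPTR.opNorm (X' * X'ᵀ)⁻¹ := by
  change ‖toE (ols X Y) - toE (ols X' Y')‖ ≤ _ * (‖toE (ols X Y)‖ + Rθ) ∧
    ‖proj Rθ (toE (ols X Y)) - proj Rθ (toE (ols X' Y'))‖ ≤ _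
  set θ := ols X Y
  have hdiff := ols_sub_ols_of_forall_ne hinv hinv' fun j hj =>
    ⟨funext (hsame j hj).1, (hsame j hj).2⟩
  have hupdate : ‖toE ((X'ᵀ i ⬝ᵥ θ - Y' i) • X'ᵀ i - (Xᵀ i ⬝ᵥ θ - Y i) • Xᵀ i)‖
      ≤ 2 * Rx ^ 2 * (‖toE θ‖ + Rθ) := by
    rw [toE_sub, toE_smul, toE_smul, ← inner_toE, ← inner_toE]
    refine (norm_sub_le _ _).trans ?_
    linarith [norm_inner_sub_smul_le (x := toE (X'ᵀ i)) (θ := toE θ) hX'i hY'i,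
      norm_inner_sub_smul_le (x := toE (Xᵀ i)) (θ := toE θ) (hXcol i) (hY i)]
  have hsens : ‖toE θ - toE (ols X' Y')‖
      ≤ 2 * Rx ^ 2 * opNorm (X' * X'ᵀ)⁻¹ * (‖toE θ‖ + Rθ) := by
    rw [← toE_sub, hdiff]
    refine (norm_toE_mulVec_le _ _).trans ?_
    rw [mul_comm _ (opNorm _), mul_assoc]
    exact mul_le_mul_of_nonneg_left hupdate (norm_nonneg _)
  refine ⟨hsens, (norm_proj_sub_proj_le_of_le hRθ ?_ hsens).trans_eq (by ring)⟩
  exact mul_nonneg (by positivity) (norm_nonneg _)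

/-- Local sensitivity of the OLS estimator: if the data matrices `(X, Y)` and `(X', Y')`
differ only in the `i`-th data point, with feature columns of (Euclidean) norm at most `R_x`
and responses bounded by `R_x R_θ`, and both Gram matrices are invertible, then
`‖θ̂(X) - θ̂(X')‖ ≤ 2R_x² ‖(X'(X')ᵀ)⁻¹‖_op (‖θ̂(X)‖ + R_θ)`, and after projecting onto the
ball of radius `R_θ`, `‖Π(θ̂(X)) - Π(θ̂(X'))‖ ≤ 8R_x²R_θ ‖(X'(X')ᵀ)⁻¹‖_op`. -/
theorem ols_sensitivity {p n : ℕ} (hp : 1 ≤ p) (hn : 1 ≤ n)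
    {Rx Rθ : ℝ} (hRx : 0 < Rx) (hRθ : 0 < Rθ) (i : Fin n)
    (X X' : Matrix (Fin p) (Fin n) ℝ) (Y Y' : Fin n → ℝ)
    (hXcol : ∀ j, ‖EPTR.toE fun r => X r j‖ ≤ Rx)
    (hY : ∀ j, |Y j| ≤ Rx * Rθ)
    (hX'i : ‖EPTR.toE fun r => X' r i‖ ≤ Rx) (hY'i : |Y' i| ≤ Rx * Rθ)
    (hsame : ∀ j, j ≠ i → (∀ r, X' r j = X r j) ∧ Y' j = Y j)
    (hinv : IsUnit (X * Xᵀ)) (hinv' : IsUnit (X' * X'ᵀ)) :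
    ‖EPTR.toE ((X * Xᵀ)⁻¹ *ᵥ (X *ᵥ Y)) - EPTR.toE ((X' * X'ᵀ)⁻¹ *ᵥ (X' *ᵥ Y'))‖
        ≤ 2 * Rx ^ 2 * EPTR.opNorm (X' * X'ᵀ)⁻¹ *
            (‖EPTR.toE ((X * Xᵀ)⁻¹ *ᵥ (X *ᵥ Y))‖ + Rθ) ∧
      ‖EPTR.proj Rθ (EPTR.toE ((X * Xᵀ)⁻¹ *ᵥ (X *ᵥ Y)))
            - EPTR.proj Rθ (EPTR.toE ((X' * X'ᵀ)⁻¹ *ᵥ (X' *ᵥ Y')))‖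
        ≤ 8 * Rx ^ 2 * Rθ * EPTR.opNorm (X' * X'ᵀ)⁻¹ :=
  ols_sensitivity_general hRθ i X X' Y Y' hXcol hY hX'i hY'i hsame hinv hinv'
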